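/- The map T ↦ π(T) is a bijection from the set of ordered trees with n edges onto the set of 132-avoiding permutations of length n. -/

import Mathlib

/-- Ordered (plane) trees: a root with a list of subtrees. -/
inductive OTree : Type where
  | node : List OTree → OTree

namespace OTree

/-- Number of edges of an ordered tree. -/
def edges : OTree → ℕ
  | node [] => 0
  | node (t :: ts) => edges t + 1 + edges (node ts)

/-- Multiset of levels (distances from the root) of the nonroot vertices. -/
def levels : OTree → Multiset ℕ
  | node [] => 0
  | node (t :: ts) => ((1 : ℕ) ::ₘ (levels t).map (· + 1)) + levels (node ts)

/-- Sum of the levels of all vertices (the root contributes 0). -/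
def levelsSum (t : OTree) : ℕ := t.levels.sum

/-- The permutation word of a tree, entries shifted up by `k`: nonroot
vertices are labeled `k+n, …, k+1` in preorder and read in postorder. -/
def wordFrom : OTree → ℕ → List ℕ
  | node [], _ => []
  | node (t :: ts), k =>
      wordFrom t (k + edges (node ts)) ++
        (k + edges (node (t :: ts))) :: wordFrom (node ts) k

/-- The permutation `π(T)` of an ordered tree, as a word on `1, …, n`. -/
def word (t : OTree) : List ℕ := wordFrom t 0

/-- The lattice-path word of a tree via preorder traversal:
`true` = east step (down an edge), `false` = north step (up an edge). -/
def pathWord : OTree → List Bool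
  | node [] => []
  | node (t :: ts) => true :: (pathWord t ++ false :: pathWord (node ts))

/-- The subtree rooted at the vertex reached by the child-index path `p`. -/
def subtreeAt? : OTree → List ℕ → Option OTree
  | t, [] => some t
  | node [], _ :: _ => none
  | node (t :: _), 0 :: p => subtreeAt? t p
  | node (_ :: ts), (i + 1) :: p => subtreeAt? (node ts) (i :: p)

/-- The list of child-index paths to the nonroot vertices, in preorder. -/
def paths : OTree → List (List ℕ)
  | node [] => []
  | node (t :: ts) =>
      ([0] :: (paths t).map (0 :: ·)) ++
        (paths (node ts)).map (fun p => match p with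
          | i :: q => (i + 1) :: q
          | [] => [])

/-- The preorder label of the nonroot vertex at path `p` (labels `n, …, 1`). -/
def labelOf (t : OTree) (p : List ℕ) : ℕ := t.edges - t.paths.idxOf p

end OTree

/-- Area under a lattice path word (`true` = east, `false` = north):
the sum over east steps of the number of north steps preceding them. -/
def pathArea : List Bool → ℕ
  | [] => 0
  | true :: w => pathArea w
  | false :: w => pathArea w + w.count true

/-- A word avoids the pattern 132. -/
def Avoids132W (w : List ℕ) : Prop :=
  ¬ ∃ i j k : ℕ, i < j ∧ j < k ∧ k < w.length ∧
      w.getD i 0 < w.getD k 0 ∧ w.getD k 0 < w.getD j 0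

/-- Number of increasing patterns of length `k` in a word: index sets on
which the word is strictly increasing. -/
def incCountW (w : List ℕ) (k : ℕ) : ℕ :=
  ((Finset.univ : Finset (Finset (Fin w.length))).filter
    (fun S => S.card = k ∧ ∀ i ∈ S, ∀ j ∈ S, i < j → w.get i < w.get j)).card

/-- A permutation of `Fin n` avoids the pattern 132. -/
def Avoids132P {n : ℕ} (π : Equiv.Perm (Fin n)) : Prop :=
  ¬ ∃ i j k : Fin n, i < j ∧ j < k ∧ π i < π k ∧ π k < π j

/-- Number of increasing patterns of length `k` in a permutation of `Fin n`. -/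
def incCountP {n : ℕ} (π : Equiv.Perm (Fin n)) (k : ℕ) : ℕ :=
  ((Finset.univ : Finset (Finset (Fin n))).filter
    (fun S => S.card = k ∧ ∀ i ∈ S, ∀ j ∈ S, i < j → π i < π j)).card

/-- A subdiagonal lattice path from `(0,0)` to `(n,n)`, as a sequence of
`2n` steps (`true` = east, `false` = north) with `n` east steps such that
every prefix has at least as many east steps as north steps. -/
def IsSubdiagPath (n : ℕ) (f : Fin (2 * n) → Bool) : Prop :=
  (Finset.univ.filter fun i => f i = true).card = n ∧
    ∀ m : ℕ, (Finset.univ.filter fun i : Fin (2 * n) => i.1 < m ∧ f i = false).card ≤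
      (Finset.univ.filter fun i : Fin (2 * n) => i.1 < m ∧ f i = true).card

/-- Area under a subdiagonal lattice path given as a step sequence. -/
def pathAreaF {n : ℕ} (f : Fin (2 * n) → Bool) : ℕ :=
  ∑ i ∈ Finset.univ.filter (fun i => f i = true),
    (Finset.univ.filter fun j : Fin (2 * n) => j < i ∧ f j = false).card


namespace OTree

theorem myInd (P : OTree → Prop) (h0 : P (node []))
    (h1 : ∀ t ts, P t → P (node ts) → P (node (t :: ts))) : ∀ t, P t
  | node [] => h0
  | node (t :: ts) => h1 t ts (myInd P h0 h1 t) (myInd P h0 h1 (node ts))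

theorem wordFrom_perm : ∀ t : OTree, ∀ k, (wordFrom t k).Perm ((List.range t.edges).map (k + 1 + ·)) := by
  refine myInd _ (by simp [wordFrom, edges]) ?_
  intro t ts iht ihts k
  simp only [wordFrom, edges]
  have h1 := iht (k + (node ts).edges)
  have h2 := ihts k
  refine (h1.append (h2.cons _)).trans ?_
  rw [← Multiset.coe_eq_coe]
  have e1 : t.edges + 1 + (node ts).edges = (node ts).edges + (t.edges + 1) := by omega
  rw [e1, List.range_add, List.range_succ]
  simp only [List.map_append, List.map_map, List.map_cons, List.map_nil,
    ← Multiset.coe_add, ← Multiset.cons_coe]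
  have e2 : (fun x => k + 1 + x) ∘ (fun x => (node ts).edges + x) =
      (fun x => k + (node ts).edges + 1 + x) := by funext x; simp only [Function.comp_apply]; omega
  have e3 : k + 1 + ((node ts).edges + t.edges) = k + (t.edges + 1 + (node ts).edges) := by omega
  rw [e2, e3]
  simp only [← Multiset.singleton_add, Multiset.coe_nil, add_zero,
    show k + ((node ts).edges + (t.edges + 1)) = k + (t.edges + 1 + (node ts).edges) from by omega]
  abel

theorem wordFrom_length (t : OTree) (k : ℕ) : (wordFrom t k).length = t.edges := by
  have := (wordFrom_perm t k).length_eq; simpa using this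

theorem mem_wordFrom {t : OTree} {k x : ℕ} (h : x ∈ wordFrom t k) :
    k + 1 ≤ x ∧ x ≤ k + t.edges := by
  have := (wordFrom_perm t k).mem_iff.1 h
  simp only [List.mem_map, List.mem_range] at this
  obtain ⟨y, hy, rfl⟩ := this
  omega

end OTree

theorem avoids_nil : Avoids132W [] := by simp [Avoids132W]

theorem avoids_append_cons (A B : List ℕ) (m : ℕ)
    (hAB : ∀ x ∈ A, ∀ y ∈ B, y < x) (hmA : ∀ x ∈ A, x < m) (hmB : ∀ y ∈ B, y < m)
    (hA : Avoids132W A) (hB : Avoids132W B) : Avoids132W (A ++ m :: B) := by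
  rintro ⟨i, j, kk, hij, hjk, hkk, h1, h2⟩
  set w := A ++ m :: B with hw
  have hlen : w.length = A.length + 1 + B.length := by simp [hw]; omega
  have gA : ∀ {n : ℕ}, n < A.length → w.getD n 0 = A.getD n 0 := fun h =>
    List.getD_append _ _ _ _ h
  have gR : ∀ {n : ℕ}, A.length ≤ n → w.getD n 0 = (m :: B).getD (n - A.length) 0 := fun h =>
    List.getD_append_right _ _ _ _ h
  have gm : w.getD A.length 0 = m := by rw [gR le_rfl]; simp
  have gB : ∀ {n : ℕ}, A.length < n → w.getD n 0 = B.getD (n - A.length - 1) 0 := by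
    intro n h
    rw [gR h.le, show n - A.length = (n - A.length - 1) + 1 from by omega, List.getD_cons_succ]
    congr 1
  have memA : ∀ {n : ℕ}, (h : n < A.length) → A.getD n 0 ∈ A := fun h => by
    rw [List.getD_eq_getElem _ _ h]; exact List.getElem_mem _
  have memB : ∀ {n : ℕ}, (h : n < B.length) → B.getD n 0 ∈ B := fun h => by
    rw [List.getD_eq_getElem _ _ h]; exact List.getElem_mem _
  rcases lt_trichotomy kk A.length with hc | hc | hc
  · exact hA ⟨i, j, kk, hij, hjk, hc, by
      rwa [gA (by omega), gA hc] at h1, by rwa [gA hc, gA (by omega)] at h2⟩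
  · subst hc
    rw [gm] at h2
    rw [gA hjk] at h2
    exact absurd h2 (not_lt.2 (hmA _ (memA hjk)).le)
  · have hkB : kk - A.length - 1 < B.length := by omega
    rcases lt_trichotomy i A.length with hi | hi | hi
    · rw [gA hi, gB hc] at h1
      exact absurd h1 (not_lt.2 (hAB _ (memA hi) _ (memB hkB)).le)
    · subst hi
      rw [gm, gB hc] at h1
      exact absurd h1 (not_lt.2 (hmB _ (memB hkB)).le)
    · have hj : A.length < j := by omega
      refine hB ⟨i - A.length - 1, j - A.length - 1, kk - A.length - 1, by omega, by omega, hkB,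
        ?_, ?_⟩
      · rwa [gB hi, gB hc] at h1
      · rwa [gB hc, gB hj] at h2

theorem OTree.avoids_wordFrom : ∀ t : OTree, ∀ k, Avoids132W (wordFrom t k) := by
  refine myInd _ (by intro k; simp [wordFrom]; exact avoids_nil) ?_
  intro t ts iht ihts k
  simp only [wordFrom, edges]
  refine avoids_append_cons _ _ _ ?_ ?_ ?_ (iht _) (ihts _)
  · intro x hx y hy
    have := mem_wordFrom hx; have := mem_wordFrom hy; omega
  · intro x hx; have := mem_wordFrom hx; omega
  · intro y hy; have := mem_wordFrom hy; omega

theorem append_cons_inj : ∀ {l1 l2 r1 r2 : List ℕ} {a : ℕ},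
    l1 ++ a :: r1 = l2 ++ a :: r2 → a ∉ l1 → a ∉ l2 → l1 = l2 ∧ r1 = r2
  | [], [], r1, r2, a, h, _, _ => by simpa using h
  | [], b :: l2, r1, r2, a, h, h1, h2 => by
      simp only [List.nil_append, List.cons_append, List.cons.injEq] at h
      exact absurd (h.1 ▸ (@List.mem_cons_self _ b l2)) h2
  | b :: l1, [], r1, r2, a, h, h1, h2 => by
      simp only [List.nil_append, List.cons_append, List.cons.injEq] at h
      exact absurd (h.1.symm ▸ (@List.mem_cons_self _ b l1)) h1
  | b :: l1, c :: l2, r1, r2, a, h, h1, h2 => by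
      simp only [List.cons_append, List.cons.injEq] at h
      obtain ⟨rfl, h⟩ := h
      have := append_cons_inj h (fun hm => h1 (List.mem_cons_of_mem _ hm))
        (fun hm => h2 (List.mem_cons_of_mem _ hm))
      exact ⟨by rw [this.1], this.2⟩

theorem OTree.wordFrom_inj : ∀ t1 t2 : OTree, ∀ k, wordFrom t1 k = wordFrom t2 k → t1 = t2 := by
  refine myInd _ ?_ ?_
  · rintro ⟨l2⟩ k h
    cases l2 with
    | nil => rfl
    | cons t' ts' => simp [wordFrom] at h
  · rintro t ts iht ihts ⟨l2⟩ k h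
    cases l2 with
    | nil => simp [wordFrom] at h
    | cons t' ts' =>
      simp only [wordFrom] at h
      have hlen : (node (t :: ts)).edges = (node (t' :: ts')).edges := by
        have := congrArg List.length h
        simp only [List.length_append, List.length_cons, wordFrom_length] at this
        simp only [edges]; omega
      have hm : k + (node (t :: ts)).edges = k + (node (t' :: ts')).edges := by rw [hlen]
      rw [← hm] at h
      have hnm1 : k + (node (t :: ts)).edges ∉ wordFrom t (k + (node ts).edges) := fun hx => by
        have := mem_wordFrom hx; simp only [edges] at this; omega
      have hnm2 : k + (node (t :: ts)).edges ∉ wordFrom t' (k + (node ts').edges) := fun hx => by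
        have := mem_wordFrom hx; simp only [edges] at hlen this; omega
      obtain ⟨hA, hB⟩ := append_cons_inj h hnm1 hnm2
      have hts : node ts = node ts' := ihts _ _ hB
      have hets : (node ts).edges = (node ts').edges := by rw [hts]
      rw [← hets] at hA
      have ht : t = t' := iht _ _ hA
      rw [ht, OTree.node.injEq, List.cons.injEq]
      exact ⟨rfl, by injection hts⟩

theorem getD_split_right (A B : List ℕ) (m : ℕ) {n : ℕ} (h : A.length < n) :
    (A ++ m :: B).getD n 0 = B.getD (n - A.length - 1) 0 := by
  rw [List.getD_append_right _ _ _ _ h.le,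
    show n - A.length = (n - A.length - 1) + 1 from by omega, List.getD_cons_succ]
  congr 1

theorem avoids_of_append_left {A R : List ℕ} (h : Avoids132W (A ++ R)) : Avoids132W A := by
  rintro ⟨i, j, kk, hij, hjk, hkk, h1, h2⟩
  refine h ⟨i, j, kk, hij, hjk, by simp; omega, ?_, ?_⟩
  · rwa [List.getD_append _ _ _ _ (by omega), List.getD_append _ _ _ _ hkk]
  · rwa [List.getD_append _ _ _ _ hkk, List.getD_append _ _ _ _ (by omega)]

theorem avoids_of_append_cons_right {A B : List ℕ} {m : ℕ}
    (h : Avoids132W (A ++ m :: B)) : Avoids132W B := by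
  rintro ⟨i, j, kk, hij, hjk, hkk, h1, h2⟩
  refine h ⟨A.length + 1 + i, A.length + 1 + j, A.length + 1 + kk, by omega, by omega,
    by simp; omega, ?_, ?_⟩
  · rw [getD_split_right _ _ _ (by omega), getD_split_right _ _ _ (by omega)]
    simp only [Nat.add_sub_cancel_left, show A.length + 1 + i - A.length - 1 = i from by omega,
      show A.length + 1 + kk - A.length - 1 = kk from by omega]
    exact h1
  · rw [getD_split_right _ _ _ (by omega), getD_split_right _ _ _ (by omega)]
    simp only [show A.length + 1 + j - A.length - 1 = j from by omega,
      show A.length + 1 + kk - A.length - 1 = kk from by omega]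
    exact h2

theorem toFinset_range_map (c l : ℕ) :
    ((List.range l).map (c + 1 + ·)).toFinset = Finset.Ioc c (c + l) := by
  ext x
  simp only [List.mem_toFinset, List.mem_map, List.mem_range, Finset.mem_Ioc]
  constructor
  · rintro ⟨a, h1, rfl⟩; omega
  · rintro ⟨h1, h2⟩; exact ⟨x - (c + 1), by omega, by omega⟩

theorem exists_tree : ∀ e k (w : List ℕ), w.Perm ((List.range e).map (k + 1 + ·)) →
    Avoids132W w → ∃ t : OTree, t.edges = e ∧ OTree.wordFrom t k = w := by
  intro e
  induction e using Nat.strong_induction_on with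
  | _ e IH =>
  intro k w hperm havd
  cases e with
  | zero =>
    have hw : w = [] := by
      have := hperm.length_eq; simpa [List.length_eq_zero_iff] using this
    exact ⟨OTree.node [], by simp [OTree.edges], by rw [hw]; simp [OTree.wordFrom]⟩
  | succ n =>
  have hwlen : w.length = n + 1 := by have := hperm.length_eq; simpa using this
  have hmmem : (k + 1 + n) ∈ w := hperm.mem_iff.2 (by simp)
  obtain ⟨j, hjlt, hjget⟩ := List.getElem_of_mem hmmem
  set m := k + 1 + n with hm
  set A := w.take j with hA
  set B := w.drop (j + 1) with hB
  have hsplit : w = A ++ m :: B := by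
    conv_lhs => rw [← List.take_append_drop j w]
    rw [List.drop_eq_getElem_cons hjlt, hjget]
  have hla : A.length = j := by rw [hA, List.length_take]; omega
  have hlb : B.length = n - j := by rw [hB, List.length_drop]; omega
  have hjn : j ≤ n := by omega
  have hsum : A.length + 1 + B.length = n + 1 := by omega
  have hnd : w.Nodup := by
    refine hperm.nodup_iff.2 (List.Nodup.map ?_ List.nodup_range)
    intro a b hab; simpa using hab
  rw [hsplit] at hnd
  rw [List.nodup_append] at hnd
  obtain ⟨hndA, hndmB, hdisj⟩ := hnd
  rw [List.nodup_cons] at hndmB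
  obtain ⟨hmB, hndB⟩ := hndmB
  have hmA : m ∉ A := fun h => hdisj _ h _ List.mem_cons_self rfl
  have hv : ∀ x ∈ w, k + 1 ≤ x ∧ x ≤ k + 1 + n := by
    intro x hx
    have := hperm.mem_iff.1 hx
    simp only [List.mem_map, List.mem_range] at this
    obtain ⟨y, hy, rfl⟩ := this; omega
  have hfull : ∀ x, k + 1 ≤ x → x ≤ k + 1 + n → x ∈ w := fun x h1 h2 =>
    hperm.mem_iff.2 (by simp; exact ⟨x - (k + 1), by omega, by omega⟩)
  have key : ∀ x ∈ A, ∀ y ∈ B, y < x := by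
    intro x hx y hy
    by_contra hcon
    push_neg at hcon
    have hxy : x ≠ y := fun heq => hdisj _ hx _ (List.mem_cons_of_mem _ hy) heq
    have hylt : y < m := by
      have : y ∈ w := by rw [hsplit]; exact List.mem_append_right _ (List.mem_cons_of_mem _ hy)
      have := (hv y this).2
      rcases lt_or_eq_of_le this with h | h
      · omega
      · exact absurd (h ▸ hy) (by rw [← hm] at h ⊢; exact h ▸ hmB)
    obtain ⟨i, hi, hxi⟩ := List.getElem_of_mem hx
    obtain ⟨j', hj', hyj⟩ := List.getElem_of_mem hy
    refine havd ⟨i, A.length, A.length + 1 + j', by omega, by omega,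
      by rw [hsplit]; simp; omega, ?_, ?_⟩
    · rw [hsplit, List.getD_append _ _ _ _ (by omega), getD_split_right _ _ _ (by omega)]
      rw [List.getD_eq_getElem _ _ hi,
        show A.length + 1 + j' - A.length - 1 = j' from by omega,
        List.getD_eq_getElem _ _ hj', hxi, hyj]
      omega
    · rw [hsplit, getD_split_right _ _ _ (by omega),
        List.getD_append_right _ _ _ _ le_rfl, Nat.sub_self]
      rw [show A.length + 1 + j' - A.length - 1 = j' from by omega,
        List.getD_eq_getElem _ _ hj', hyj]
      simpa using hylt
  -- B's values are exactly k+1 .. k+B.length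
  have hBIoc : B.toFinset = Finset.Ioc k (k + B.length) := by
    rcases Nat.eq_zero_or_pos B.length with h0 | hpos
    · rw [List.length_eq_zero_iff] at h0
      simp [h0]
    · have hne : B.toFinset.Nonempty := by
        rw [List.toFinset_nonempty_iff]
        exact List.ne_nil_of_length_pos hpos
      set b0 := B.toFinset.max' hne with hb0
      have hb0mem : b0 ∈ B := List.mem_toFinset.1 (B.toFinset.max'_mem hne)
      have hb0max : ∀ y ∈ B, y ≤ b0 := fun y hy =>
        Finset.le_max' _ _ (List.mem_toFinset.2 hy)
      have hb0w : b0 ∈ w := by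
        rw [hsplit]; exact List.mem_append_right _ (List.mem_cons_of_mem _ hb0mem)
      have hb0lt : b0 < m := by
        have := (hv b0 hb0w).2
        have : b0 ≠ m := fun h => hmB (h ▸ hb0mem)
        have := (hv b0 hb0w).2; omega
      have hstep1 : Finset.Ioc k b0 ⊆ B.toFinset := by
        intro x hx
        rw [Finset.mem_Ioc] at hx
        have hxw : x ∈ w := hfull x (by omega) (by omega)
        rw [hsplit, List.mem_append, List.mem_cons] at hxw
        rcases hxw with h | h | h
        · exact absurd (key x h b0 hb0mem) (by omega)
        · omega
        · exact List.mem_toFinset.2 h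
      have hstep2 : B.toFinset ⊆ Finset.Ioc k b0 := by
        intro y hy
        rw [List.mem_toFinset] at hy
        have hyw : y ∈ w := by
          rw [hsplit]; exact List.mem_append_right _ (List.mem_cons_of_mem _ hy)
        rw [Finset.mem_Ioc]
        exact ⟨by have := (hv y hyw).1; omega, hb0max y hy⟩
      have heq : B.toFinset = Finset.Ioc k b0 := subset_antisymm hstep2 hstep1
      have hcard : B.toFinset.card = B.length := List.toFinset_card_of_nodup hndB
      rw [heq, Nat.card_Ioc] at hcard
      have : b0 = k + B.length := by
        have := (hv b0 hb0w).1; omega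
      rw [heq, this]
  have hBub : ∀ y ∈ B, y ≤ k + B.length := by
    intro y hy
    have := List.mem_toFinset.2 hy
    rw [hBIoc, Finset.mem_Ioc] at this; omega
  have hAlb : ∀ x ∈ A, k + B.length + 1 ≤ x := by
    intro x hx
    by_contra hc
    push_neg at hc
    have hxw : x ∈ w := by rw [hsplit]; exact List.mem_append_left _ hx
    have hx1 := (hv x hxw).1
    have : x ∈ B.toFinset := by rw [hBIoc, Finset.mem_Ioc]; omega
    rw [List.mem_toFinset] at this
    exact absurd (key x hx x this) (lt_irrefl x)
  have hAIoc : A.toFinset = Finset.Ioc (k + B.length) (k + B.length + A.length) := by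
    ext x
    rw [List.mem_toFinset, Finset.mem_Ioc]
    constructor
    · intro hx
      have hxw : x ∈ w := by rw [hsplit]; exact List.mem_append_left _ hx
      have h1 := hAlb x hx
      have h2 := (hv x hxw).2
      have h3 : x ≠ m := fun h => hmA (h ▸ hx)
      omega
    · rintro ⟨h1, h2⟩
      have hxw : x ∈ w := hfull x (by omega) (by omega)
      rw [hsplit, List.mem_append, List.mem_cons] at hxw
      rcases hxw with h | h | h
      · exact h
      · omega
      · have := hBub x h; omega
  have hrangeNd : ∀ c : ℕ, ∀ l : ℕ, ((List.range l).map (c + 1 + ·)).Nodup := fun c l =>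
    List.Nodup.map (fun a b hab => by simpa using hab) List.nodup_range
  have hBperm : B.Perm ((List.range B.length).map (k + 1 + ·)) := by
    refine List.perm_of_nodup_nodup_toFinset_eq hndB (hrangeNd k _) ?_
    rw [hBIoc, toFinset_range_map]
  have hAperm : A.Perm ((List.range A.length).map (k + B.length + 1 + ·)) := by
    refine List.perm_of_nodup_nodup_toFinset_eq hndA (hrangeNd (k + B.length) _) ?_
    rw [hAIoc, toFinset_range_map]
  have havdA : Avoids132W A := avoids_of_append_left (hsplit ▸ havd)
  have havdB : Avoids132W B := avoids_of_append_cons_right (hsplit ▸ havd)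
  obtain ⟨TB, hTBe, hTBw⟩ := IH B.length (by omega) k B hBperm havdB
  obtain ⟨TA, hTAe, hTAw⟩ := IH A.length (by omega) (k + B.length) A hAperm havdA
  obtain ⟨ls⟩ := TB
  have he : (OTree.node (TA :: ls)).edges = n + 1 := by
    simp only [OTree.edges] at hTBe ⊢
    omega
  refine ⟨OTree.node (TA :: ls), he, ?_⟩
  simp only [OTree.wordFrom]
  rw [hTBe, he, hTAw, hTBw, hsplit, show k + (n + 1) = m from by omega]

theorem stmt9_aux_map (n : ℕ) :
    (List.range n).map ((0:ℕ) + 1 + ·) = (List.range n).map (· + 1) := by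
  apply List.map_congr_left; intro x _; omega

/-- `T ↦ π(T)` is a bijection from ordered trees with `n` edges
onto the 132-avoiding permutations of length `n` (as words on `{1,…,n}`). -/
theorem stmt9 (n : ℕ) :
    Set.BijOn OTree.word {T : OTree | T.edges = n}
      {w : List ℕ | w.Perm ((List.range n).map (· + 1)) ∧ Avoids132W w} := by
  refine ⟨?_, ?_, ?_⟩
  · intro T hT
    have hT' : T.edges = n := hT
    refine ⟨?_, OTree.avoids_wordFrom T 0⟩
    have h := OTree.wordFrom_perm T 0
    rw [hT', stmt9_aux_map] at h
    exact h
  · intro T1 _ T2 _ h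
    exact OTree.wordFrom_inj T1 T2 0 h
  · rintro w ⟨hperm, havd⟩
    obtain ⟨T, he, hwT⟩ := exists_tree n 0 w ((stmt9_aux_map n) ▸ hperm) havd
    exact ⟨T, he, hwT⟩
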